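/- Suppose n ≥ 2 and τ_1,…,τ_r ∈ 𝕋 have minimal wrap-around separation Δ(τ) with (n+1)Δ(τ) ≥ α for some α > 0. Then for every i, ∑_{j≠i} |F_N(τ_j − τ_i)| ≤ C_0 ((n+1)Δ(τ))^{-2}, where C_0 = (4/π²) α/α = 4/π² (taking β = 0 in the general constant C_0 = (4/π²)(α − 2β)^{-1} α). -/

import Mathlib

/-!
Write `x_j ∈ [0, 1)` for the fractional part of `τ_j - τ_i`. The closed form
`F_N(t) = sin²((n+1)πt) / ((n+1)² sin²(πt))` bounds the `j`-th term by `((n+1)² sin²(π x_j))⁻¹`.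
Since `1/sin²θ - 1/θ²` increases on `(0, π/2]`, where it ends at `1 - 4/π²`, we get
`1/sin²(πx) ≤ (x⁻² + (1-x)⁻²)/π² + 1 - 4/π²`. The `m = r - 1` points `x_j` lie in `[Δ, 1 - Δ]` and
are `Δ`-separated, so the `k`-th smallest of the `x_j`, and of the `1 - x_j`, is at least `kΔ`.
Hence `∑ x_j⁻² ≤ Δ⁻² ∑_{k ≤ m} k⁻²`, likewise for `1 - x_j`, and `(m+1)Δ ≤ 1`; the estimate
`∑_{k ≤ m} k⁻² ≤ 5/3 - 2/(2m+1)` then gives the constant `4/π²`.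
-/

open Real

/-- The normalized Fejér kernel of order `N = 2n+1`:
`F_N(t) = (1/(n+1)) ∑_{k=-n}^{n} (1 - |k|/(n+1)) e^{i2πkt}`, written in its real (cosine) form. -/
noncomputable def fejer (n : ℕ) (t : ℝ) : ℝ :=
  (1 / (n + 1)) * ∑ k ∈ Finset.Icc (-(n : ℤ)) n, (1 - |(k : ℝ)| / (n + 1)) * Real.cos (2 * π * k * t)

/-- The minimal wrap-around distance `Δ(τ) = min_{ℓ≠ℓ'} inf_{p∈ℤ} |τ_ℓ − τ_{ℓ'} + p|`. -/
noncomputable def sep {r : ℕ} (τ : Fin r → ℝ) : ℝ :=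
  sInf {d : ℝ | ∃ (i j : Fin r) (p : ℤ), i ≠ j ∧ d = |τ i - τ j + p|}

open Finset

theorem sum_Icc_neg_succ {M : Type*} [AddCommMonoid M] (f : ℤ → M) (m : ℕ) :
    ∑ k ∈ Icc (-((m + 1 : ℕ) : ℤ)) (m + 1 : ℕ), f k =
      ∑ k ∈ Icc (-(m : ℤ)) m, f k + (f (m + 1) + f (-(m + 1))) := by
  have h : Icc (-((m + 1 : ℕ) : ℤ)) (m + 1 : ℕ) =
      insert ((m : ℤ) + 1) (insert (-((m : ℤ) + 1)) (Icc (-(m : ℤ)) m)) := by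
    ext k; simp only [mem_Icc, mem_insert]; omega
  rw [h, sum_insert (by simp only [mem_insert, mem_Icc]; omega), sum_insert (by simp)]
  abel

theorem sin_mul_sum_Icc_cos (θ : ℝ) (m : ℕ) :
    sin θ * ∑ k ∈ Icc (-(m : ℤ)) m, cos (2 * k * θ) = sin ((2 * m + 1) * θ) := by
  induction m with
  | zero => simp
  | succ m ih =>
    rw [sum_Icc_neg_succ, mul_add, ih]
    push_cast
    rw [show (2 * ((m : ℝ) + 1) + 1) * θ = (2 * m + 1) * θ + 2 * θ by ring,
      show 2 * (-((m : ℝ) + 1)) * θ = -((2 * m + 1) * θ + θ) by ring,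
      show 2 * ((m : ℝ) + 1) * θ = (2 * m + 1) * θ + θ by ring,
      cos_neg, sin_add, cos_add, sin_two_mul, cos_two_mul]
    linear_combination (-2 * sin ((2 * m + 1) * θ)) * sin_sq_add_cos_sq θ

theorem sin_sq_mul_sum_Icc (θ : ℝ) (n : ℕ) :
    sin θ ^ 2 * ∑ k ∈ Icc (-(n : ℤ)) n, ((n : ℝ) + 1 - |(k : ℝ)|) * cos (2 * k * θ) =
      sin ((n + 1) * θ) ^ 2 := by
  induction n with
  | zero => simp
  | succ n ih =>
    have hsplit : ∑ k ∈ Icc (-((n + 1 : ℕ) : ℤ)) (n + 1 : ℕ),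
        (((n + 1 : ℕ) : ℝ) + 1 - |(k : ℝ)|) * cos (2 * k * θ) =
        ∑ k ∈ Icc (-(n : ℤ)) n, ((n : ℝ) + 1 - |(k : ℝ)|) * cos (2 * k * θ) +
          ∑ k ∈ Icc (-((n + 1 : ℕ) : ℤ)) (n + 1 : ℕ), cos (2 * k * θ) := by
      have hweight : ∀ k ∈ Icc (-(n : ℤ)) n, (((n + 1 : ℕ) : ℝ) + 1 - |(k : ℝ)|) * cos (2 * k * θ)
          = ((n : ℝ) + 1 - |(k : ℝ)|) * cos (2 * k * θ) + cos (2 * k * θ) := fun k _ => by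
        push_cast; ring
      rw [sum_Icc_neg_succ, sum_Icc_neg_succ, sum_congr rfl hweight, sum_add_distrib]
      push_cast
      rw [abs_neg, abs_of_nonneg (by positivity)]
      ring
    rw [hsplit, mul_add, ih, pow_two (sin θ), mul_assoc, sin_mul_sum_Icc_cos]
    push_cast
    rw [show ((n : ℝ) + 1 + 1) * θ = (n + 1) * θ + θ by ring,
      show (2 * ((n : ℝ) + 1) + 1) * θ = 2 * ((n + 1) * θ) + θ by ring,
      sin_add, sin_add, sin_two_mul, cos_two_mul]
    linear_combination -sin ((n + 1) * θ) ^ 2 * sin_sq_add_cos_sq θ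
      + sin θ ^ 2 * sin_sq_add_cos_sq ((n + 1) * θ)

theorem fejer_add_int (n : ℕ) (t : ℝ) (p : ℤ) : fejer n (t + p) = fejer n t := by
  unfold fejer
  congr 1
  refine sum_congr rfl fun k _ => ?_
  rw [show 2 * π * k * (t + p) = 2 * π * k * t + (k * p : ℤ) * (2 * π) by push_cast; ring,
    cos_add_int_mul_two_pi]

theorem sq_mul_fejer (n : ℕ) (t : ℝ) : ((n : ℝ) + 1) ^ 2 * fejer n t =
    ∑ k ∈ Icc (-(n : ℤ)) n, ((n : ℝ) + 1 - |(k : ℝ)|) * cos (2 * k * (π * t)) := by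
  rw [fejer, ← mul_assoc, mul_sum]
  refine sum_congr rfl fun k _ => ?_
  field_simp

theorem sin_sq_mul_fejer (n : ℕ) (t : ℝ) :
    sin (π * t) ^ 2 * (((n : ℝ) + 1) ^ 2 * fejer n t) = sin ((n + 1) * (π * t)) ^ 2 := by
  rw [sq_mul_fejer, sin_sq_mul_sum_Icc]

theorem abs_fejer_le (n : ℕ) {t : ℝ} (ht : sin (π * t) ≠ 0) :
    |fejer n t| ≤ (((n : ℝ) + 1) ^ 2 * sin (π * t) ^ 2)⁻¹ := by
  have hpos : 0 < ((n : ℝ) + 1) ^ 2 * sin (π * t) ^ 2 := by positivity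
  have h : fejer n t = sin ((n + 1) * (π * t)) ^ 2 / (((n : ℝ) + 1) ^ 2 * sin (π * t) ^ 2) := by
    rw [eq_div_iff hpos.ne', ← sin_sq_mul_fejer]
    ring
  rw [h, abs_of_nonneg (by positivity), div_eq_mul_inv]
  exact mul_le_of_le_one_left (by positivity) (sin_sq_le_one _)

theorem pow_three_mul_cos_le_sin_pow_three {θ : ℝ} (h0 : 0 ≤ θ) (h1 : θ ≤ π / 2) :
    θ ^ 3 * cos θ ≤ sin θ ^ 3 := by
  have hθ : θ ^ 2 ≤ 4 := by nlinarith [pi_lt_d2]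
  have hsin : θ - θ ^ 3 / 6 ≤ sin θ := sin_ge_sub_cube h0
  have hsin_half : θ / 2 - (θ / 2) ^ 3 / 6 ≤ sin (θ / 2) := sin_ge_sub_cube (by linarith)
  have hcos : cos θ = 1 - 2 * sin (θ / 2) ^ 2 := by
    have h := cos_two_mul (θ / 2)
    rw [mul_div_cancel₀ _ two_ne_zero, cos_sq'] at h
    linarith
  have hcos' : cos θ ≤ 1 - 2 * (θ / 2 - (θ / 2) ^ 3 / 6) ^ 2 := by
    rw [hcos]
    nlinarith [pow_le_pow_left₀ (by nlinarith) hsin_half 2]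
  have hcube : (θ - θ ^ 3 / 6) ^ 3 ≤ sin θ ^ 3 := pow_le_pow_left₀ (by nlinarith) hsin 3
  have hpoly : θ ^ 3 * (1 - 2 * (θ / 2 - (θ / 2) ^ 3 / 6) ^ 2) ≤ (θ - θ ^ 3 / 6) ^ 3 := by
    nlinarith [pow_nonneg h0 7, mul_nonneg (pow_nonneg h0 9) (by nlinarith : (0:ℝ) ≤ 4 - θ ^ 2)]
  nlinarith [mul_le_mul_of_nonneg_left hcos' (pow_nonneg h0 3)]

theorem monotoneOn_inv_sin_sq_sub_inv_sq :
    MonotoneOn (fun θ => (sin θ ^ 2)⁻¹ - (θ ^ 2)⁻¹) (Set.Ioc 0 (π / 2)) := by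
  have hsin : ∀ θ ∈ Set.Ioc 0 (π / 2), 0 < sin θ := fun θ hθ =>
    sin_pos_of_pos_of_lt_pi hθ.1 (by linarith [hθ.2, pi_pos])
  have hderiv : ∀ θ ∈ Set.Ioc 0 (π / 2), HasDerivAt (fun θ => (sin θ ^ 2)⁻¹ - (θ ^ 2)⁻¹)
      (2 * θ / (θ ^ 2) ^ 2 - 2 * sin θ * cos θ / (sin θ ^ 2) ^ 2) θ := by
    intro θ hθ
    have h1 := ((hasDerivAt_sin θ).pow 2).inv (pow_ne_zero 2 (hsin θ hθ).ne')
    have h2 := (hasDerivAt_pow 2 θ).inv (pow_ne_zero 2 hθ.1.ne')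
    exact (h1.sub h2).congr_deriv (by norm_num; ring)
  refine monotoneOn_of_deriv_nonneg (convex_Ioc 0 (π / 2))
    (HasDerivAt.continuousOn fun θ hθ => hderiv θ hθ) (fun θ hθ => ?_) (fun θ hθ => ?_)
  · exact (hderiv θ (interior_subset hθ)).differentiableAt.differentiableWithinAt
  · rw [interior_Ioc] at hθ
    have hθ' := Set.Ioo_subset_Ioc_self hθ
    have hs := hsin θ hθ'
    have h0 := hθ.1
    rw [(hderiv θ hθ').deriv, sub_nonneg, div_le_div_iff₀ (by positivity) (by positivity)]
    have := pow_three_mul_cos_le_sin_pow_three hθ.1.le hθ.2.le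
    nlinarith [mul_le_mul_of_nonneg_left this (by positivity : 0 ≤ 2 * θ * sin θ)]

theorem inv_sin_sq_le {θ : ℝ} (h0 : 0 < θ) (h1 : θ ≤ π / 2) :
    (sin θ ^ 2)⁻¹ ≤ (θ ^ 2)⁻¹ + (1 - 4 / π ^ 2) := by
  have h := monotoneOn_inv_sin_sq_sub_inv_sq ⟨h0, h1⟩ ⟨pi_div_two_pos, le_rfl⟩ h1
  simp only [sin_pi_div_two, div_pow, inv_div] at h
  norm_num at h
  linarith

theorem inv_sin_pi_mul_sq_le {x : ℝ} (h0 : 0 < x) (h1 : x < 1) :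
    (sin (π * x) ^ 2)⁻¹ ≤ ((x ^ 2)⁻¹ + ((1 - x) ^ 2)⁻¹) / π ^ 2 + (1 - 4 / π ^ 2) := by
  have hx : 0 < 1 - x := by linarith
  have hpi := pi_pos
  rcases le_total x (1 / 2) with hle | hle
  · have h := inv_sin_sq_le (mul_pos hpi h0) (by nlinarith)
    rw [mul_pow, mul_inv] at h
    have : 0 ≤ ((1 - x) ^ 2)⁻¹ / π ^ 2 := by positivity
    rw [add_div]
    linarith [show (π ^ 2)⁻¹ * (x ^ 2)⁻¹ = (x ^ 2)⁻¹ / π ^ 2 by ring]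
  · have h := inv_sin_sq_le (mul_pos hpi hx) (by nlinarith)
    rw [mul_pow, mul_inv, show π * (1 - x) = π - π * x by ring, sin_pi_sub] at h
    have : 0 ≤ (x ^ 2)⁻¹ / π ^ 2 := by positivity
    rw [add_div]
    linarith [show (π ^ 2)⁻¹ * ((1 - x) ^ 2)⁻¹ = ((1 - x) ^ 2)⁻¹ / π ^ 2 by ring]

section Separated

variable {ι : Type*} [DecidableEq ι] {x : ι → ℝ} {δ : ℝ}

theorem add_le_of_pairwise_insert {s : Finset ι} {j k : ι}
    (hs : ((insert j s : Finset ι) : Set ι).Pairwise fun j k => δ ≤ |x j - x k|) (hj : j ∉ s)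
    (hmin : ∀ k ∈ s, x j ≤ x k) (hk : k ∈ s) : x j + δ ≤ x k := by
  have h : δ ≤ |x j - x k| :=
    hs (mem_insert_self j _) (mem_insert_of_mem hk) fun h => hj (h ▸ hk)
  rw [abs_sub_comm, abs_of_nonneg (sub_nonneg.2 (hmin k hk))] at h
  linarith

theorem sum_le_sum_range_of_pairwise {f : ℝ → ℝ} (hδ : 0 ≤ δ) (s : Finset ι)
    (hs : (s : Set ι).Pairwise fun j k => δ ≤ |x j - x k|) {a : ℝ} (hf : AntitoneOn f (Set.Ici a))
    (ha : ∀ j ∈ s, a ≤ x j) :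
    ∑ j ∈ s, f (x j) ≤ ∑ t ∈ range #s, f (a + t * δ) := by
  induction s using Finset.induction_on_min_value x generalizing a with
  | empty => simp
  | insert j s hj hmin ih =>
    have hgap : ∀ k ∈ s, a + δ ≤ x k := fun k hk => by
      linarith [add_le_of_pairwise_insert hs hj hmin hk, ha j (mem_insert_self j s)]
    have ih' := ih (hs.mono (by simp)) (hf.mono (Set.Ici_subset_Ici.2 (by linarith))) hgap
    rw [sum_insert hj, card_insert_of_notMem hj, sum_range_succ', add_comm]
    gcongr ?_ + ?_
    · refine ih'.trans_eq (sum_congr rfl fun t _ => ?_)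
      push_cast
      ring_nf
    · simpa using hf Set.self_mem_Ici (ha j (mem_insert_self j s)) (ha j (mem_insert_self j s))

theorem exists_le_of_pairwise (s : Finset ι)
    (hs : (s : Set ι).Pairwise fun j k => δ ≤ |x j - x k|) (hne : s.Nonempty) {a : ℝ}
    (ha : ∀ j ∈ s, a ≤ x j) : ∃ j ∈ s, a + (#s - 1) * δ ≤ x j := by
  induction s using Finset.induction_on_min_value x generalizing a with
  | empty => simp at hne
  | insert j s hj hmin ih =>
    rcases s.eq_empty_or_nonempty with rfl | hne'
    · exact ⟨j, by simpa using ha j (by simp)⟩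
    have hgap : ∀ k ∈ s, a + δ ≤ x k := fun k hk => by
      linarith [add_le_of_pairwise_insert hs hj hmin hk, ha j (mem_insert_self j s)]
    obtain ⟨k, hk, hak⟩ := ih (hs.mono (by simp)) hne' hgap
    refine ⟨k, mem_insert_of_mem hk, ?_⟩
    rw [card_insert_of_notMem hj]
    push_cast
    linarith

end Separated

-- For small `m` the bound `π²/6` is too weak for `two_mul_sum_range_inv_sq_add_le_four`.
theorem sum_range_inv_sq_le {m : ℕ} (hm : 1 ≤ m) :
    ∑ t ∈ range m, (((t : ℝ) + 1) ^ 2)⁻¹ ≤ 5 / 3 - 2 / (2 * (m : ℝ) + 1) := by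
  induction m, hm using Nat.le_induction with
  | base => norm_num
  | succ m hm ih =>
    rw [sum_range_succ]
    have hm' : (1 : ℝ) ≤ m := by exact_mod_cast hm
    have h : (((m : ℝ) + 1) ^ 2)⁻¹ ≤ 2 / (2 * (m : ℝ) + 1) - 2 / (2 * ((m + 1 : ℕ) : ℝ) + 1) := by
      push_cast
      rw [div_sub_div _ _ (by positivity) (by positivity), inv_eq_one_div,
        div_le_div_iff₀ (by positivity) (by positivity)]
      nlinarith
    linarith

theorem two_mul_sum_range_inv_sq_add_le_four {m : ℕ} (hm : 1 ≤ m) {Δ : ℝ} (hΔ : 0 < Δ)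
    (hmΔ : ((m : ℝ) + 1) * Δ ≤ 1) :
    2 * ∑ t ∈ range m, (((t : ℝ) + 1) ^ 2)⁻¹ + m * (π ^ 2 - 4) * Δ ^ 2 ≤ 4 := by
  have hm' : (1 : ℝ) ≤ m := by exact_mod_cast hm
  have hπ : π ^ 2 ≤ 10 := by nlinarith [pi_lt_d2, pi_pos]
  have hΔm : Δ ^ 2 ≤ (((m : ℝ) + 1) ^ 2)⁻¹ := by
    rw [← inv_pow]
    exact pow_le_pow_left₀ hΔ.le (by rw [← one_div, le_div_iff₀ (by positivity)]; linarith) 2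
  have hrat : 6 * (m : ℝ) * (((m : ℝ) + 1) ^ 2)⁻¹ ≤ 2 / 3 + 4 / (2 * (m : ℝ) + 1) := by
    rw [← div_eq_mul_inv, div_add_div _ _ (by positivity) (by positivity),
      div_le_div_iff₀ (by positivity) (by positivity)]
    nlinarith [mul_nonneg (by linarith : (0 : ℝ) ≤ m) (sq_nonneg ((m : ℝ) - 7 / 4))]
  have hsq : m * (π ^ 2 - 4) * Δ ^ 2 ≤ 6 * m * (((m : ℝ) + 1) ^ 2)⁻¹ := by
    nlinarith [mul_le_mul_of_nonneg_left hΔm (by positivity : (0 : ℝ) ≤ 6 * m),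
      mul_nonneg (by positivity : (0 : ℝ) ≤ m * Δ ^ 2) (by linarith : (0 : ℝ) ≤ 10 - π ^ 2)]
  linarith [sum_range_inv_sq_le hm, show 2 * (2 / (2 * (m : ℝ) + 1)) = 4 / (2 * m + 1) by ring]

theorem sum_inv_sin_sq_le_of_pairwise {ι : Type*} [DecidableEq ι] {s : Finset ι} {x : ι → ℝ}
    {Δ : ℝ} (hΔ : 0 < Δ) (hx : ∀ j ∈ s, Δ ≤ x j ∧ x j ≤ 1 - Δ)
    (hs : (s : Set ι).Pairwise fun j k => Δ ≤ |x j - x k|) :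
    ∑ j ∈ s, (sin (π * x j) ^ 2)⁻¹ ≤ 4 / (π ^ 2 * Δ ^ 2) := by
  rcases s.eq_empty_or_nonempty with rfl | hne
  · simp only [sum_empty]; positivity
  set S := ∑ t ∈ range #s, (((t : ℝ) + 1) ^ 2)⁻¹
  have hanti : AntitoneOn (fun y : ℝ => (y ^ 2)⁻¹) (Set.Ici Δ) := fun a ha b _ hab =>
    inv_anti₀ (pow_pos (hΔ.trans_le ha) 2) (pow_le_pow_left₀ (hΔ.le.trans ha) hab 2)
  have hrange : ∑ t ∈ range #s, ((Δ + t * Δ) ^ 2)⁻¹ = S / Δ ^ 2 := by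
    rw [sum_div]
    refine sum_congr rfl fun t _ => ?_
    field_simp
    ring
  have hleft : ∑ j ∈ s, (x j ^ 2)⁻¹ ≤ S / Δ ^ 2 :=
    hrange ▸ sum_le_sum_range_of_pairwise hΔ.le s hs hanti fun j hj => (hx j hj).1
  have hright : ∑ j ∈ s, ((1 - x j) ^ 2)⁻¹ ≤ S / Δ ^ 2 := by
    refine hrange ▸ sum_le_sum_range_of_pairwise (x := fun j => 1 - x j) hΔ.le s
      (hs.mono' fun j k h => ?_) hanti fun j hj => by linarith [(hx j hj).2]
    rwa [sub_sub_sub_cancel_left, abs_sub_comm]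
  have hcard : ((#s : ℝ) + 1) * Δ ≤ 1 := by
    obtain ⟨j, hj, hxj⟩ := exists_le_of_pairwise s hs hne fun j hj => (hx j hj).1
    linarith [(hx j hj).2]
  calc ∑ j ∈ s, (sin (π * x j) ^ 2)⁻¹
      ≤ ∑ j ∈ s, (((x j ^ 2)⁻¹ + ((1 - x j) ^ 2)⁻¹) / π ^ 2 + (1 - 4 / π ^ 2)) :=
        sum_le_sum fun j hj => inv_sin_pi_mul_sq_le (by linarith [(hx j hj).1])
          (by linarith [(hx j hj).2])
    _ = (∑ j ∈ s, (x j ^ 2)⁻¹ + ∑ j ∈ s, ((1 - x j) ^ 2)⁻¹) / π ^ 2 + #s * (1 - 4 / π ^ 2) := by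
        rw [sum_add_distrib, ← sum_div, sum_add_distrib, sum_const, nsmul_eq_mul]
    _ ≤ 2 * (S / Δ ^ 2) / π ^ 2 + #s * (1 - 4 / π ^ 2) := by
        gcongr
        linarith
    _ = (2 * S + #s * (π ^ 2 - 4) * Δ ^ 2) / (π ^ 2 * Δ ^ 2) := by
        field_simp
    _ ≤ 4 / (π ^ 2 * Δ ^ 2) := by
        gcongr
        exact two_mul_sum_range_inv_sq_add_le_four (card_pos.2 hne) hΔ hcard

theorem sum_abs_fejer_le_of_pairwise {ι : Type*} [DecidableEq ι] (n : ℕ) {s : Finset ι}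
    {x : ι → ℝ} {Δ : ℝ} (hΔ : 0 < Δ) (hx : ∀ j ∈ s, Δ ≤ x j ∧ x j ≤ 1 - Δ)
    (hs : (s : Set ι).Pairwise fun j k => Δ ≤ |x j - x k|) :
    ∑ j ∈ s, |fejer n (x j)| ≤ 4 / π ^ 2 * (((n : ℝ) + 1) * Δ)⁻¹ ^ 2 := by
  have hsin : ∀ j ∈ s, sin (π * x j) ≠ 0 := fun j hj =>
    (sin_pos_of_pos_of_lt_pi (by nlinarith [(hx j hj).1, pi_pos])
      (by nlinarith [(hx j hj).2, pi_pos])).ne'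
  calc ∑ j ∈ s, |fejer n (x j)| ≤ ∑ j ∈ s, (((n : ℝ) + 1) ^ 2 * sin (π * x j) ^ 2)⁻¹ :=
        sum_le_sum fun j hj => abs_fejer_le n (hsin j hj)
    _ = (((n : ℝ) + 1) ^ 2)⁻¹ * ∑ j ∈ s, (sin (π * x j) ^ 2)⁻¹ := by
        rw [mul_sum]
        exact sum_congr rfl fun j _ => mul_inv _ _
    _ ≤ (((n : ℝ) + 1) ^ 2)⁻¹ * (4 / (π ^ 2 * Δ ^ 2)) := by
        gcongr
        exact sum_inv_sin_sq_le_of_pairwise hΔ hx hs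
    _ = 4 / π ^ 2 * (((n : ℝ) + 1) * Δ)⁻¹ ^ 2 := by
        rw [mul_inv, mul_pow, inv_pow, inv_pow]
        ring

section Sep

variable {r : ℕ} {τ : Fin r → ℝ} {i j k : Fin r}

theorem sep_le_abs_sub_add_int (hij : i ≠ j) (p : ℤ) : sep τ ≤ |τ i - τ j + p| :=
  csInf_le ⟨0, by rintro _ ⟨_, _, _, _, rfl⟩; positivity⟩ ⟨i, j, p, hij, rfl⟩

theorem sep_le_fract_sub (hji : j ≠ i) : sep τ ≤ Int.fract (τ j - τ i) := by
  have h := sep_le_abs_sub_add_int (τ := τ) hji (-⌊τ j - τ i⌋)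
  rwa [Int.cast_neg, ← sub_eq_add_neg, ← Int.fract, abs_of_nonneg (Int.fract_nonneg _)] at h

theorem fract_sub_le_one_sub_sep (hji : j ≠ i) : Int.fract (τ j - τ i) ≤ 1 - sep τ := by
  have h := sep_le_abs_sub_add_int (τ := τ) hji (-⌊τ j - τ i⌋ - 1)
  rw [show τ j - τ i + ((-⌊τ j - τ i⌋ - 1 : ℤ) : ℝ) = Int.fract (τ j - τ i) - 1 by
    rw [Int.fract]; push_cast; ring, abs_of_neg (by linarith [Int.fract_lt_one (τ j - τ i)])] at h
  linarith

theorem sep_le_abs_fract_sub_sub_fract_sub (hjk : j ≠ k) :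
    sep τ ≤ |Int.fract (τ j - τ i) - Int.fract (τ k - τ i)| := by
  have h := sep_le_abs_sub_add_int (τ := τ) hjk (⌊τ k - τ i⌋ - ⌊τ j - τ i⌋)
  rwa [show τ j - τ k + ((⌊τ k - τ i⌋ - ⌊τ j - τ i⌋ : ℤ) : ℝ) =
    Int.fract (τ j - τ i) - Int.fract (τ k - τ i) by rw [Int.fract, Int.fract]; push_cast; ring] at h

end Sep

theorem sum_abs_fejer_le_general (n r : ℕ) (τ : Fin r → ℝ) (α : ℝ) (hα : 0 < α)
    (hsep : α ≤ ((n : ℝ) + 1) * sep τ) (i : Fin r) :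
    ∑ j ∈ Finset.univ.erase i, |fejer n (τ j - τ i)| ≤
      (4 / π ^ 2) * (((n : ℝ) + 1) * sep τ)⁻¹ ^ 2 := by
  have hΔ : 0 < sep τ := pos_of_mul_pos_right (hα.trans_le hsep) (by positivity)
  have hperiodic : ∀ j, fejer n (τ j - τ i) = fejer n (Int.fract (τ j - τ i)) := fun j => by
    simpa only [Int.fract_add_floor] using fejer_add_int n (Int.fract (τ j - τ i)) ⌊τ j - τ i⌋
  simp only [hperiodic]
  refine sum_abs_fejer_le_of_pairwise n hΔ (fun j hj => ?_) fun j _ k _ hjk => ?_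
  · have hji := ne_of_mem_erase hj
    exact ⟨sep_le_fract_sub hji, fract_sub_le_one_sub_sep hji⟩
  · exact sep_le_abs_fract_sub_sub_fract_sub hjk

theorem sum_abs_fejer_le (n r : ℕ) (hn : 2 ≤ n) (τ : Fin r → ℝ) (α : ℝ) (hα : 0 < α)
    (hsep : α ≤ ((n : ℝ) + 1) * sep τ) (i : Fin r) :
    ∑ j ∈ Finset.univ.erase i, |fejer n (τ j - τ i)| ≤
      (4 / π ^ 2) * (((n : ℝ) + 1) * sep τ)⁻¹ ^ 2 :=
  sum_abs_fejer_le_general n r τ α hα hsep i
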